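/- Let ν ∈ ℝ and κ = 0. Define Ψ_M(r) := r^{−iν}·(1, −i) and Ψ_U(r) := r^{iν}·(1, i) for r > 0. Then Ψ_M and Ψ_U both satisfy d^{ν,0}Ψ = 0 on (0,∞), and every differentiable function f : (0,∞) → ℂ² with d^{ν,0}f = 0 on (0,∞) is of the form f = a·Ψ_M + b·Ψ_U for some constants a, b ∈ ℂ. -/

import Mathlib

open Complex

/-- `IsDiracSol ν κ lam f₁ f₂` says that `f = (f₁, f₂) : (0,∞) → ℂ²` is differentiable on
`(0,∞)` and satisfies the Coulomb–Dirac equation `d^{ν,κ} f = lam • f` there. -/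
def IsDiracSol (ν κ : ℝ) (lam : ℂ) (f₁ f₂ : ℝ → ℂ) : Prop :=
  ∀ r : ℝ, 0 < r →
    DifferentiableAt ℝ f₁ r ∧ DifferentiableAt ℝ f₂ r ∧
    -((ν : ℂ) / (r : ℂ)) * f₁ r - deriv f₂ r - ((κ : ℂ) / (r : ℂ)) * f₂ r = lam * f₁ r ∧
    deriv f₁ r - ((κ : ℂ) / (r : ℂ)) * f₁ r - ((ν : ℂ) / (r : ℂ)) * f₂ r = lam * f₂ r

/-- For `r > 0` and `γ ∈ ℂ`, `r^γ := exp (γ · ln r)`. -/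
noncomputable def rpowC (r : ℝ) (γ : ℂ) : ℂ := Complex.exp (γ * Real.log r)

/-
For `κ = 0` the system reads `f₁' = (ν/r) f₂`, `f₂' = -(ν/r) f₁`, so the combinations
`f₁ + i f₂` and `f₁ - i f₂` decouple into the Euler equations `g' = ∓(iν/r) g`, whose solutions
on `(0,∞)` are the multiples of `r^{∓iν}`.
-/

lemma hasDerivAt_rpowC (γ : ℂ) {r : ℝ} (hr : 0 < r) :
    HasDerivAt (fun s : ℝ => rpowC s γ) (γ / r * rpowC r γ) r := by
  have hlog : HasDerivAt (fun s : ℝ => (Real.log s : ℂ)) ((r : ℂ)⁻¹) r := by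
    simpa using (Real.hasDerivAt_log hr.ne').ofReal_comp
  exact (hlog.const_mul γ).cexp.congr_deriv (by rw [rpowC]; ring)

lemma rpowC_one (γ : ℂ) : rpowC 1 γ = 1 := by
  simp [rpowC]

lemma rpowC_mul_rpowC_neg (r : ℝ) (γ : ℂ) : rpowC r γ * rpowC r (-γ) = 1 := by
  rw [rpowC, rpowC, ← Complex.exp_add, neg_mul, add_neg_cancel, Complex.exp_zero]

lemma eq_mul_rpowC_of_hasDerivAt {g : ℝ → ℂ} {γ : ℂ}
    (hg : ∀ r : ℝ, 0 < r → HasDerivAt g (γ / r * g r) r) {r : ℝ} (hr : 0 < r) :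
    g r = g 1 * rpowC r γ := by
  have hF : ∀ s ∈ Set.Ioi (0 : ℝ), HasDerivAt (fun t => g t * rpowC t (-γ)) 0 s := by
    intro s hs
    refine ((hg s hs).mul (hasDerivAt_rpowC (-γ) hs)).congr_deriv ?_
    ring
  have hconst : g r * rpowC r (-γ) = g 1 * rpowC 1 (-γ) :=
    isOpen_Ioi.is_const_of_deriv_eq_zero isPreconnected_Ioi
      (fun s hs => (hF s hs).differentiableAt.differentiableWithinAt)
      (fun s hs => (hF s hs).deriv) hr (Set.mem_Ioi.2 one_pos)
  rw [rpowC_one, mul_one] at hconst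
  linear_combination rpowC r γ * hconst - g r * rpowC_mul_rpowC_neg r γ

lemma isDiracSol_zero_zero_iff {ν : ℝ} {f₁ f₂ : ℝ → ℂ} :
    IsDiracSol ν 0 0 f₁ f₂ ↔ ∀ r : ℝ, 0 < r →
      HasDerivAt f₁ (ν / r * f₂ r) r ∧ HasDerivAt f₂ (-(ν / r) * f₁ r) r := by
  refine forall₂_congr fun r _ => ?_
  simp only [ofReal_zero, zero_div, zero_mul, sub_zero]
  constructor
  · rintro ⟨h₁, h₂, e₂, e₁⟩
    exact ⟨h₁.hasDerivAt.congr_deriv (by linear_combination e₁),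
      h₂.hasDerivAt.congr_deriv (by linear_combination -e₂)⟩
  · rintro ⟨h₁, h₂⟩
    exact ⟨h₁.differentiableAt, h₂.differentiableAt, by rw [h₂.deriv]; ring,
      by rw [h₁.deriv]; ring⟩

lemma isDiracSol_rpowC (ν : ℝ) {c : ℂ} (hc : c ^ 2 = -1) :
    IsDiracSol ν 0 0 (fun r => rpowC r (c * ν)) (fun r => rpowC r (c * ν) * c) := by
  refine isDiracSol_zero_zero_iff.2 fun r hr => ⟨?_, ?_⟩
  · refine (hasDerivAt_rpowC (c * ν) hr).congr_deriv ?_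
    ring
  · refine ((hasDerivAt_rpowC (c * ν) hr).mul_const c).congr_deriv ?_
    linear_combination (ν / r * rpowC r (c * ν)) * hc

lemma IsDiracSol.hasDerivAt_add_mul {ν : ℝ} {f₁ f₂ : ℝ → ℂ} (hf : IsDiracSol ν 0 0 f₁ f₂)
    {c : ℂ} (hc : c ^ 2 = -1) {r : ℝ} (hr : 0 < r) :
    HasDerivAt (fun s => f₁ s + c * f₂ s) (-c * ν / r * (f₁ r + c * f₂ r)) r := by
  obtain ⟨h₁, h₂⟩ := isDiracSol_zero_zero_iff.1 hf r hr
  refine (h₁.add (h₂.const_mul c)).congr_deriv ?_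
  linear_combination (ν / r * f₂ r) * hc

/-- For `κ = 0`, the functions `Ψ_M(r) = r^{−iν}·(1, −i)` and `Ψ_U(r) = r^{iν}·(1, i)` solve
`d^{ν,0}Ψ = 0` on `(0,∞)`, and every differentiable solution of `d^{ν,0}f = 0` on `(0,∞)` is
a linear combination of them. -/
theorem fundamental_solutions_kappa_zero (ν : ℝ) :
    IsDiracSol ν 0 0 (fun r => rpowC r (-(I * (ν : ℂ))))
      (fun r => rpowC r (-(I * (ν : ℂ))) * (-I)) ∧
    IsDiracSol ν 0 0 (fun r => rpowC r (I * (ν : ℂ)))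
      (fun r => rpowC r (I * (ν : ℂ)) * I) ∧
    ∀ f₁ f₂ : ℝ → ℂ, IsDiracSol ν 0 0 f₁ f₂ →
      ∃ a b : ℂ, ∀ r : ℝ, 0 < r →
        f₁ r = a * rpowC r (-(I * (ν : ℂ))) + b * rpowC r (I * (ν : ℂ)) ∧
        f₂ r = a * (rpowC r (-(I * (ν : ℂ))) * (-I)) + b * (rpowC r (I * (ν : ℂ)) * I) := by
  have hI : I ^ 2 = -1 := I_sq
  have hnegI : (-I) ^ 2 = -1 := by rw [neg_sq, I_sq]
  refine ⟨by simpa only [neg_mul] using isDiracSol_rpowC ν hnegI, isDiracSol_rpowC ν hI,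
    fun f₁ f₂ hf => ⟨(f₁ 1 + I * f₂ 1) / 2, (f₁ 1 + -I * f₂ 1) / 2, fun r hr => ?_⟩⟩
  have hplus := eq_mul_rpowC_of_hasDerivAt (fun s hs => hf.hasDerivAt_add_mul hI hs) hr
  have hminus := eq_mul_rpowC_of_hasDerivAt (fun s hs => hf.hasDerivAt_add_mul hnegI hs) hr
  rw [neg_mul] at hplus
  rw [neg_neg] at hminus
  constructor
  · linear_combination (1 / 2 : ℂ) * hplus + (1 / 2 : ℂ) * hminus
  · linear_combination (-I / 2) * hplus + (I / 2) * hminus + f₂ r * hI
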